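/- Assume that ⟨ν, E(x)⟩ = 0 for every x ∈ ∂Ω and every unit outer normal ν at x. Let x ∈ ∂Ω and v ∈ ℝ³ be such that ⟨n₀, v⟩ > 0 for some unit outer normal n₀ at x, let t ∈ ℝ, and suppose the backward exit time satisfies 0 < t₋(t,x,v) < ∞ and t + 1 ≥ t₋(t,x,v). Then the backward exit position x₋(t,x,v) lies on ∂Ω, and ⟨ν, v₋(t,x,v)⟩ < 0 for every unit outer normal ν at x₋(t,x,v). -/

import Mathlib

open Set
open scoped RealInnerProductSpace

noncomputable section

/-- Three-dimensional Euclidean space. -/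
abbrev V3 : Type := EuclideanSpace ℝ (Fin 3)

/-- `ν` is a unit outer normal to the convex set `Ω` at the point `x`. -/
def IsUnitOuterNormalAt (Ω : Set V3) (x ν : V3) : Prop :=
  ‖ν‖ = 1 ∧ ∀ y ∈ Ω, ⟪ν, y - x⟫ ≤ 0

namespace NonGrazingAux

lemma support_closure {Ω : Set V3} {p ν : V3} (hν : IsUnitOuterNormalAt Ω p ν)
    {z : V3} (hz : z ∈ closure Ω) : ⟪ν, z - p⟫ ≤ 0 := by
  have hcont : Continuous fun w : V3 => ⟪ν, w - p⟫ :=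
    continuous_const.inner (continuous_id.sub continuous_const)
  have hc : IsClosed {w : V3 | ⟪ν, w - p⟫ ≤ 0} := isClosed_le hcont continuous_const
  exact closure_minimal (fun w hw => hν.2 w hw) hc hz

lemma not_mem_of_inner_nonneg {Ω : Set V3} (hΩo : IsOpen Ω) {p ν z : V3}
    (hν : IsUnitOuterNormalAt Ω p ν) (hz : 0 ≤ ⟪ν, z - p⟫) : z ∉ Ω := by
  intro hzΩ
  obtain ⟨ε, hε, hball⟩ := Metric.isOpen_iff.1 hΩo z hzΩ
  have hmem : z + (ε/2) • ν ∈ Ω := by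
    apply hball
    have : dist (z + (ε/2) • ν) z = ε/2 := by
      rw [dist_eq_norm]
      simp [norm_smul, hν.1, abs_of_pos hε]
    rw [Metric.mem_ball, this]; linarith
  have hsupp := hν.2 _ hmem
  have hexp : ⟪ν, z + (ε/2) • ν - p⟫ = ⟪ν, z - p⟫ + ε/2 := by
    have h1 : z + (ε/2) • ν - p = (z - p) + (ε/2) • ν := by abel
    rw [h1, inner_add_right, real_inner_smul_right, real_inner_self_eq_norm_sq, hν.1]
    ring
  rw [hexp] at hsupp
  linarith

lemma exists_unit_outer_normal {Ω : Set V3} (hΩo : IsOpen Ω) (hΩc : Convex ℝ Ω)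
    (hne : Ω.Nonempty) {p : V3} (hp : p ∉ Ω) : ∃ ν, IsUnitOuterNormalAt Ω p ν := by
  obtain ⟨f, hf⟩ := geometric_hahn_banach_open_point hΩc hΩo hp
  set w := (InnerProductSpace.toDual ℝ V3).symm f with hwdef
  have hwapp : ∀ z, ⟪w, z⟫ = f z := fun z => InnerProductSpace.toDual_symm_apply
  have hw0 : w ≠ 0 := by
    obtain ⟨z, hz⟩ := hne
    intro h0
    have h1 := hf z hz
    rw [← hwapp z, ← hwapp p, h0] at h1
    simp at h1
  have hnw : (0:ℝ) < ‖w‖ := norm_pos_iff.2 hw0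
  refine ⟨‖w‖⁻¹ • w, ?_, ?_⟩
  · rw [norm_smul]
    simp [abs_of_pos (inv_pos.2 hnw), inv_mul_cancel₀ hnw.ne']
  · intro z hz
    have h1 : ⟪w, z - p⟫ ≤ 0 := by
      rw [inner_sub_right, hwapp z, hwapp p]
      linarith [hf z hz]
    rw [real_inner_smul_left]
    have := inv_pos.2 hnw
    nlinarith


lemma infDist_le_neg_inner {Ω : Set V3} (hΩo : IsOpen Ω) {p m : V3}
    (hm : IsUnitOuterNormalAt Ω p m) {z : V3} (hz : z ∈ closure Ω) :
    Metric.infDist z Ωᶜ ≤ -⟪m, z - p⟫ := by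
  set d := -⟪m, z - p⟫ with hd
  have hd0 : 0 ≤ d := by
    have := support_closure hm hz; simp only [hd]; linarith
  have hq : z + d • m ∈ Ωᶜ := by
    apply not_mem_of_inner_nonneg hΩo hm
    have h1 : z + d • m - p = (z - p) + d • m := by abel
    rw [h1, inner_add_right, real_inner_smul_right, real_inner_self_eq_norm_sq, hm.1]
    simp only [hd]; ring_nf; nlinarith
  calc Metric.infDist z Ωᶜ ≤ dist z (z + d • m) := Metric.infDist_le_dist_of_mem hq
    _ = d := by
        rw [dist_eq_norm]
        simp [norm_smul, hm.1, abs_of_nonneg hd0]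

lemma exists_pair {Ω : Set V3} (hΩo : IsOpen Ω) (hΩc : Convex ℝ Ω) (hΩne : Ω.Nonempty)
    (hcne : Ωᶜ.Nonempty) {z : V3} (hz : z ∈ Ω) :
    ∃ p m, p ∈ frontier Ω ∧ IsUnitOuterNormalAt Ω p m ∧
      ‖z - p‖ = Metric.infDist z Ωᶜ ∧ -⟪m, z - p⟫ = Metric.infDist z Ωᶜ := by
  set ζ := Metric.infDist z Ωᶜ with hζ
  have hζpos : 0 < ζ := by
    rw [hζ, ← (hΩo.isClosed_compl).notMem_iff_infDist_pos hcne]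
    simp [hz]
  obtain ⟨p, hpc, hpd⟩ := (hΩo.isClosed_compl).exists_infDist_eq_dist hcne z
  have hdist : dist z p = ζ := hpd.symm
  have hball : Metric.ball z ζ ⊆ Ω := by
    intro w hw
    by_contra hwn
    have h1 := Metric.infDist_le_dist_of_mem (x := z) (mem_compl hwn)
    rw [Metric.mem_ball, dist_comm] at hw
    rw [← hζ] at h1
    linarith
  have hpcl : p ∈ closure Ω := by
    rw [Metric.mem_closure_iff]
    intro ε hε
    set s : ℝ := max 0 (1 - ε / (2*ζ)) with hs
    have hs0 : 0 ≤ s := le_max_left _ _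
    have hs1 : s < 1 := by
      apply max_lt (by norm_num)
      have : 0 < ε / (2*ζ) := by positivity
      linarith
    refine ⟨z + s • (p - z), hball ?_, ?_⟩
    · rw [Metric.mem_ball, dist_eq_norm]
      have h2 : z + s • (p - z) - z = s • (p - z) := by abel
      rw [h2, norm_smul, Real.norm_eq_abs, abs_of_nonneg hs0]
      have hnorm : ‖p - z‖ = ζ := by rw [← dist_eq_norm, dist_comm]; exact hdist
      rw [hnorm]
      nlinarith
    · rw [dist_eq_norm]
      have : p - (z + s • (p - z)) = (1 - s) • (p - z) := by
        rw [sub_smul, one_smul]; abel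
      rw [this, norm_smul, Real.norm_eq_abs, abs_of_nonneg (by linarith)]
      have hnorm : ‖p - z‖ = ζ := by rw [← dist_eq_norm, dist_comm]; exact hdist
      rw [hnorm]
      have h1s : 1 - s ≤ ε / (2*ζ) := by
        have := le_max_right 0 (1 - ε / (2*ζ)); linarith [le_max_right (0:ℝ) (1 - ε / (2*ζ))]
      calc (1 - s) * ζ ≤ (ε / (2*ζ)) * ζ := by nlinarith
        _ = ε / 2 := by field_simp
        _ < ε := by linarith
  have hpfr : p ∈ frontier Ω := by
    rw [hΩo.frontier_eq]; exact ⟨hpcl, hpc⟩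
  obtain ⟨m, hm⟩ := exists_unit_outer_normal hΩo hΩc hΩne hpc
  have hub : ∀ r, 0 ≤ r → r < ζ → ⟪m, z - p⟫ ≤ -r := by
    intro r hr0 hr
    have hw : z + r • m ∈ Ω := by
      apply hball
      rw [Metric.mem_ball, dist_eq_norm]
      have h2 : z + r • m - z = r • m := by abel
      rw [h2, norm_smul, Real.norm_eq_abs, abs_of_nonneg hr0, hm.1]
      simpa using hr
    have := hm.2 _ hw
    have hexp : ⟪m, z + r • m - p⟫ = ⟪m, z - p⟫ + r := by
      have h1 : z + r • m - p = (z - p) + r • m := by abel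
      rw [h1, inner_add_right, real_inner_smul_right, real_inner_self_eq_norm_sq, hm.1]
      ring
    rw [hexp] at this
    linarith
  have hge : ζ ≤ -⟪m, z - p⟫ := by
    by_contra hcon
    push_neg at hcon
    set r₀ := -⟪m, z - p⟫ with hr₀
    have hr₀0 : 0 ≤ r₀ := by
      have := support_closure hm (subset_closure hz); simp only [hr₀]; linarith
    have := hub ((r₀ + ζ)/2) (by linarith) (by linarith)
    simp only [hr₀] at this ⊢
    linarith
  have hle : -⟪m, z - p⟫ ≤ ζ := by
    have h1 := abs_real_inner_le_norm m (z - p)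
    have hnorm : ‖z - p‖ = ζ := by rw [← dist_eq_norm]; exact hdist
    rw [hm.1, hnorm, one_mul] at h1
    have := abs_le.1 h1
    linarith [this.1]
  exact ⟨p, m, hpfr, hm, by rw [← dist_eq_norm]; exact hdist, le_antisymm hle hge⟩


set_option maxHeartbeats 1000000 in
lemma step (E : V3 → V3) (X V : ℝ → V3)
    (hX : ∀ s, HasDerivAt X (V s) s) (hV : ∀ s, HasDerivAt V (E (X s)) s)
    (a b Δ B : ℝ) (hΔ : 0 < Δ) (hab : b = a + Δ) (hB0 : 0 ≤ B)
    (p m p' m' : V3) (za zb : ℝ)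
    (hEm : ∀ s ∈ Icc a b, |⟪m, E (X s)⟫| ≤ B)
    (hEm' : ∀ s ∈ Icc a b, |⟪m', E (X s)⟫| ≤ B)
    (hpae : -⟪m, X a - p⟫ = za) (hzleb : zb ≤ -⟪m, X b - p⟫)
    (hp'be : -⟪m', X b - p'⟫ = zb) (hzlea : za ≤ -⟪m', X a - p'⟫) :
    (-⟪m', V b⟫ ≤ -⟪m, V a⟫ + 2*B*Δ) ∧ (zb ≤ za + Δ*(-⟪m, V a⟫) + B*Δ^2) := by
  have hXc : Continuous X := by
    rw [continuous_iff_continuousAt]; exact fun s => (hX s).continuousAt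
  have hF : ∀ (w q : V3) (u : ℝ), HasDerivAt (fun s => -⟪w, X s - q⟫) (-⟪w, V u⟫) u := by
    intro w q u
    have h1 : HasDerivAt (fun s => X s - q) (V u) u := (hX u).sub_const q
    have h2 := HasDerivAt.inner ℝ (hasDerivAt_const u w) h1
    exact (by simpa using h2 : HasDerivAt (fun s => ⟪w, X s - q⟫) ⟪w, V u⟫ u).neg
  have hF' : ∀ (w : V3) (u : ℝ), HasDerivAt (fun s => -⟪w, V s⟫) (-⟪w, E (X u)⟫) u := by
    intro w u
    have h2 := HasDerivAt.inner ℝ (hasDerivAt_const u w) (hV u)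
    exact (by simpa using h2 : HasDerivAt (fun s => ⟪w, V s⟫) ⟪w, E (X u)⟫ u).neg
  have hba : a < b := by rw [hab]; linarith
  have hbaΔ : b - a = Δ := by rw [hab]; ring
  -- Lipschitz bound for s ↦ -⟪w, V s⟫ on [a,b]
  have hlip : ∀ (w : V3), (∀ s ∈ Icc a b, |⟪w, E (X s)⟫| ≤ B) →
      ∀ u ∈ Icc a b, ∀ v ∈ Icc a b, |(-⟪w, V v⟫) - (-⟪w, V u⟫)| ≤ B * |v - u| := by
    intro w hw u hu v hv
    have := Convex.norm_image_sub_le_of_norm_hasDerivWithin_le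
      (f := fun s => -⟪w, V s⟫) (f' := fun s => -⟪w, E (X s)⟫) (s := Icc a b) (C := B)
      (fun z hz => (hF' w z).hasDerivWithinAt) (fun z hz => by
        rw [Real.norm_eq_abs, abs_neg]; exact hw z hz) (convex_Icc _ _) hu hv
    simpa [Real.norm_eq_abs] using this
  -- second part : Taylor estimate
  have hTay : -⟪m, X b - p⟫ ≤ -⟪m, X a - p⟫ + Δ*(-⟪m, V a⟫) + B*Δ^2 := by
    have hg : ∀ u : ℝ, HasDerivAt (fun s => (-⟪m, X s - p⟫) - (s - a)*(-⟪m, V a⟫))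
        ((-⟪m, V u⟫) - (-⟪m, V a⟫)) u := by
      intro u
      have h2 : HasDerivAt (fun s : ℝ => (s - a)*(-⟪m, V a⟫)) (-⟪m, V a⟫) u := by
        simpa using ((hasDerivAt_id u).sub_const a).mul_const (-⟪m, V a⟫)
      exact (hF m p u).sub h2
    have hgb : ∀ z ∈ Icc a b, ‖(-⟪m, V z⟫) - (-⟪m, V a⟫)‖ ≤ B*Δ := by
      intro z hz
      rw [Real.norm_eq_abs]
      have h1 := hlip m hEm a (left_mem_Icc.2 hba.le) z hz
      have h3 : |z - a| ≤ Δ := by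
        rw [abs_of_nonneg (by linarith [hz.1])]; linarith [hz.2, hab.le]
      calc |(-⟪m, V z⟫) - (-⟪m, V a⟫)| ≤ B * |z - a| := h1
        _ ≤ B * Δ := mul_le_mul_of_nonneg_left h3 hB0
    have h4 := Convex.norm_image_sub_le_of_norm_hasDerivWithin_le
      (f := fun s => (-⟪m, X s - p⟫) - (s - a)*(-⟪m, V a⟫))
      (f' := fun s => (-⟪m, V s⟫) - (-⟪m, V a⟫)) (s := Icc a b) (C := B*Δ)
      (fun z _ => (hg z).hasDerivWithinAt) hgb (convex_Icc _ _)
      (left_mem_Icc.2 hba.le) (right_mem_Icc.2 hba.le)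
    rw [Real.norm_eq_abs, Real.norm_eq_abs] at h4
    have h5 := (abs_le.1 h4).2
    simp only [sub_self, zero_mul, sub_zero] at h5
    rw [hbaΔ, abs_of_pos hΔ] at h5
    nlinarith [h5]
  -- first part : mean value comparison of the two normals
  obtain ⟨θ, hθ, hθeq⟩ := exists_hasDerivAt_eq_slope (f := fun s => ⟪m' - m, X s⟫)
    (f' := fun s => ⟪m' - m, V s⟫) hba
    ((continuous_const.inner hXc).continuousOn)
    (fun z _ => by
      have h2 := HasDerivAt.inner ℝ (hasDerivAt_const z (m' - m)) (hX z)
      simpa using h2)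
  have hθmem : θ ∈ Icc a b := ⟨hθ.1.le, hθ.2.le⟩
  have hslope : 0 ≤ ⟪m' - m, V θ⟫ := by
    rw [hθeq]
    apply div_nonneg _ (by linarith)
    have hexp : ∀ s : ℝ, ⟪m' - m, X s⟫
        = ((-⟪m, X s - p⟫) + ⟪m', X s - p'⟫) + (⟪m', p'⟫ - ⟪m, p⟫) := by
      intro s
      rw [inner_sub_left, inner_sub_right, inner_sub_right]; ring
    have hDb : 0 ≤ (-⟪m, X b - p⟫) + ⟪m', X b - p'⟫ := by
      have h2 : ⟪m', X b - p'⟫ = -zb := by linarith [hp'be]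
      linarith [hzleb]
    have hDa : (-⟪m, X a - p⟫) + ⟪m', X a - p'⟫ ≤ 0 := by
      have h2 : ⟪m', X a - p'⟫ ≤ -za := by linarith [hzlea]
      linarith [hpae.le]
    rw [hexp a, hexp b]
    linarith
  have hc1 : -⟪m', V b⟫ ≤ -⟪m', V θ⟫ + B*Δ := by
    have h1 := (abs_le.1 (hlip m' hEm' θ hθmem b (right_mem_Icc.2 hba.le))).2
    have h2 : |b - θ| ≤ Δ := by
      rw [abs_of_nonneg (by linarith [hθ.2.le])]; linarith [hθ.1, hab.le]
    nlinarith [h1, mul_le_mul_of_nonneg_left h2 hB0]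
  have hc2 : -⟪m', V θ⟫ ≤ -⟪m, V θ⟫ := by
    have h1 : ⟪m', V θ⟫ - ⟪m, V θ⟫ = ⟪m' - m, V θ⟫ := (inner_sub_left _ _ _).symm
    linarith
  have hc3 : -⟪m, V θ⟫ ≤ -⟪m, V a⟫ + B*Δ := by
    have h1 := (abs_le.1 (hlip m hEm a (left_mem_Icc.2 hba.le) θ hθmem)).2
    have h2 : |θ - a| ≤ Δ := by
      rw [abs_of_nonneg (by linarith [hθ.1.le])]; linarith [hθ.2, hab.le]
    nlinarith [h1, mul_le_mul_of_nonneg_left h2 hB0]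
  exact ⟨by linarith, by linarith [hTay, hzleb, hpae.ge]⟩


set_option maxHeartbeats 2000000 in
lemma core (Ω : Set V3) (hΩo : IsOpen Ω) (hΩc : Convex ℝ Ω) (hΩne : Ω.Nonempty)
    (hcne : Ωᶜ.Nonempty)
    (E : V3 → V3)
    (hEtan : ∀ x ∈ frontier Ω, ∀ ν : V3, IsUnitOuterNormalAt Ω x ν → ⟪ν, E x⟫ = 0)
    (L : ℝ) (hL0 : 0 ≤ L)
    (hLip : ∀ z ∈ closure Ω, ∀ w ∈ closure Ω, ‖E z - E w‖ ≤ L * ‖z - w‖)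
    (X V : ℝ → V3) (hX : ∀ s, HasDerivAt X (V s) s) (hV : ∀ s, HasDerivAt V (E (X s)) s)
    (s₀ ρ : ℝ) (hρ0 : 0 < ρ) (hρL : L * ρ^2 ≤ 1/4)
    (hmem : ∀ σ ∈ Ioc s₀ (s₀ + ρ), X σ ∈ Ω)
    (hy : X s₀ ∈ frontier Ω)
    (ν : V3) (hν : IsUnitOuterNormalAt Ω (X s₀) ν)
    (hvel : 0 ≤ ⟪ν, V s₀⟫) : False := by
  classical
  -- derivative facts
  have hF : ∀ (m p : V3) (u : ℝ), HasDerivAt (fun s => -⟪m, X s - p⟫) (-⟪m, V u⟫) u := by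
    intro m p u
    have h1 : HasDerivAt (fun s => X s - p) (V u) u := (hX u).sub_const p
    have h2 := HasDerivAt.inner ℝ (hasDerivAt_const u m) h1
    exact (by simpa using h2 : HasDerivAt (fun s => ⟪m, X s - p⟫) ⟪m, V u⟫ u).neg
  have hF' : ∀ (m : V3) (u : ℝ), HasDerivAt (fun s => -⟪m, V s⟫) (-⟪m, E (X u)⟫) u := by
    intro m u
    have h2 := HasDerivAt.inner ℝ (hasDerivAt_const u m) (hV u)
    exact (by simpa using h2 : HasDerivAt (fun s => ⟪m, V s⟫) ⟪m, E (X u)⟫ u).neg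
  -- basic continuity facts
  have hXc : Continuous X := by
    rw [continuous_iff_continuousAt]; exact fun s => (hX s).continuousAt
  have hVc : Continuous V := by
    rw [continuous_iff_continuousAt]; exact fun s => (hV s).continuousAt
  set zeta : ℝ → ℝ := fun σ => Metric.infDist (X σ) Ωᶜ with hzeta
  have hzc : Continuous zeta := (Metric.continuous_infDist_pt Ωᶜ).comp hXc
  have hXcl : ∀ σ ∈ Icc s₀ (s₀ + ρ), X σ ∈ closure Ω := by
    intro σ hσ
    rcases eq_or_lt_of_le hσ.1 with h | h
    · rw [← h]; exact hy.1
    · exact subset_closure (hmem σ ⟨h, hσ.2⟩)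
  -- velocity bound
  obtain ⟨M₁, hM₁⟩ := (isCompact_Icc (a := s₀) (b := s₀ + ρ)).exists_bound_of_continuousOn
    hVc.continuousOn
  set M : ℝ := max M₁ 0 with hMdef
  have hM0 : 0 ≤ M := le_max_right _ _
  have hM : ∀ σ ∈ Icc s₀ (s₀ + ρ), ‖V σ‖ ≤ M := fun σ hσ => (hM₁ σ hσ).trans (le_max_left _ _)
  -- X is M-Lipschitz on the interval
  have hXlip : ∀ a ∈ Icc s₀ (s₀ + ρ), ∀ b ∈ Icc s₀ (s₀ + ρ), ‖X b - X a‖ ≤ M * |b - a| := by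
    intro a ha b hb
    have := Convex.norm_image_sub_le_of_norm_hasDerivWithin_le
      (f := X) (f' := V) (s := Icc s₀ (s₀ + ρ)) (C := M)
      (fun u hu => (hX u).hasDerivWithinAt) hM (convex_Icc _ _) ha hb
    simpa [Real.norm_eq_abs] using this
  -- zeta at s₀ and positivity inside
  have hzs0 : zeta s₀ = 0 := by
    apply Metric.infDist_zero_of_mem_closure
    have := frontier_eq_closure_inter_closure (s := Ω) ▸ hy
    exact this.2
  have hzpos : ∀ σ ∈ Ioc s₀ (s₀ + ρ), 0 < zeta σ := by
    intro σ hσ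
    rw [hzeta]
    rw [← (hΩo.isClosed_compl).notMem_iff_infDist_pos hcne]
    simp [hmem σ hσ]
  -- upper bound of zeta by linear functionals from supporting pairs
  have hzle : ∀ (p m : V3), IsUnitOuterNormalAt Ω p m → ∀ σ ∈ Icc s₀ (s₀ + ρ),
      zeta σ ≤ -⟪m, X σ - p⟫ := by
    intro p m hm σ hσ
    exact infDist_le_neg_inner hΩo hm (hXcl σ hσ)
  -- maximum of zeta
  obtain ⟨τh, hτmem, hmax⟩ := (isCompact_Icc (a := s₀) (b := s₀ + ρ)).exists_isMaxOn
    ⟨s₀, left_mem_Icc.2 (by linarith)⟩ hzc.continuousOn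
  set S : ℝ := zeta τh with hSdef
  have hSmax : ∀ σ ∈ Icc s₀ (s₀ + ρ), zeta σ ≤ S := fun σ hσ => hmax hσ
  have hS : 0 < S :=
    lt_of_lt_of_le (hzpos (s₀ + ρ) ⟨by linarith, le_rfl⟩)
      (hSmax (s₀ + ρ) ⟨by linarith, le_rfl⟩)
  have hτgt : s₀ < τh := by
    rcases eq_or_lt_of_le hτmem.1 with h | h
    · exfalso
      have hS0 : S = 0 := by rw [hSdef, ← h]; exact hzs0
      linarith
    · exact h
  set T : ℝ := τh - s₀ with hTdef
  have hT : 0 < T := by simp only [hTdef]; linarith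
  have hTρ : T ≤ ρ := by have := hτmem.2; simp only [hTdef]; linarith
  -- choice of the step size
  set Cc : ℝ := 2*L*M*ρ^2 + L*S*ρ + L*M*ρ + 1 with hCcdef
  have hCc : 0 < Cc := by
    have h1 : 0 ≤ 2*L*M*ρ^2 := by positivity
    have h2 : 0 ≤ L*S*ρ := by positivity
    have h3 : 0 ≤ L*M*ρ := by positivity
    simp only [hCcdef]; linarith
  obtain ⟨Δ, hΔ, hΔ1, hΔS, N, hN0, hNΔ⟩ :
      ∃ Δ : ℝ, 0 < Δ ∧ Δ ≤ 1 ∧ Δ ≤ S/(4*Cc) ∧ ∃ N : ℕ, 0 < N ∧ (N:ℝ)*Δ = T := by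
    have hq : 0 < S/(4*Cc) := by positivity
    have hΔ₀ : 0 < min 1 (S/(4*Cc)) := lt_min one_pos hq
    set Δ₀ := min 1 (S/(4*Cc)) with hΔ₀def
    have hn0 : 0 < Nat.ceil (T/Δ₀) := Nat.ceil_pos.2 (by positivity)
    have hnR : (0:ℝ) < (Nat.ceil (T/Δ₀) : ℝ) := by exact_mod_cast hn0
    have hle : T/Δ₀ ≤ (Nat.ceil (T/Δ₀) : ℝ) := Nat.le_ceil _
    have hΔΔ₀ : T / (Nat.ceil (T/Δ₀) : ℝ) ≤ Δ₀ := by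
      rw [div_le_iff₀ hnR]
      calc T = (T/Δ₀) * Δ₀ := by field_simp
        _ ≤ (Nat.ceil (T/Δ₀) : ℝ) * Δ₀ := by nlinarith
        _ = Δ₀ * (Nat.ceil (T/Δ₀) : ℝ) := by ring
    refine ⟨T / (Nat.ceil (T/Δ₀) : ℝ), by positivity,
      hΔΔ₀.trans (min_le_left _ _), hΔΔ₀.trans (min_le_right _ _),
      Nat.ceil (T/Δ₀), hn0, by field_simp⟩
  set B : ℝ := L * (S + M*Δ) with hBdef
  have hB0 : 0 ≤ B := by positivity
  -- partition points
  have hσmem : ∀ i : ℕ, i ≤ N → s₀ + i*Δ ∈ Icc s₀ τh := by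
    intro i hi
    have h1 : (0:ℝ) ≤ (i:ℝ)*Δ := by positivity
    have hiN : (i:ℝ) ≤ (N:ℝ) := by exact_mod_cast hi
    have h2 : (i:ℝ)*Δ ≤ (N:ℝ)*Δ := by nlinarith
    have h3 : (N:ℝ)*Δ = τh - s₀ := hNΔ
    exact ⟨by linarith, by linarith⟩
  have hIccsub : Icc s₀ τh ⊆ Icc s₀ (s₀+ρ) := Icc_subset_Icc le_rfl (by linarith [hτmem.2])
  have hzeq : ∀ σ, zeta σ = Metric.infDist (X σ) Ωᶜ := fun _ => rfl
  clear_value zeta M S T Cc B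
  -- field bound along the trajectory near a supporting pair
  have hEb : ∀ (a : ℝ), a ∈ Icc s₀ τh → ∀ (p m : V3), p ∈ frontier Ω →
      IsUnitOuterNormalAt Ω p m → ‖X a - p‖ ≤ S →
      ∀ s ∈ Icc s₀ τh, |s - a| ≤ Δ → |⟪m, E (X s)⟫| ≤ B := by
    intro a ha p m hpf hm hpa s hs hsa
    have htan : ⟪m, E p⟫ = 0 := hEtan p hpf m hm
    have h1 : ⟪m, E (X s)⟫ = ⟪m, E (X s) - E p⟫ := by
      rw [inner_sub_right, htan]; ring
    rw [h1]
    have h2 := abs_real_inner_le_norm m (E (X s) - E p)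
    rw [hm.1, one_mul] at h2
    have hpcl : p ∈ closure Ω := frontier_subset_closure hpf
    have h3 := hLip (X s) (hXcl s (hIccsub hs)) p hpcl
    have h5 := hXlip a (hIccsub ha) s (hIccsub hs)
    have h6 : ‖X s - p‖ ≤ ‖X s - X a‖ + ‖X a - p‖ := by
      have heq : X s - p = (X s - X a) + (X a - p) := by abel
      rw [heq]; exact norm_add_le _ _
    have h7 : M * |s - a| ≤ M * Δ := mul_le_mul_of_nonneg_left hsa hM0
    have h8 : ‖X s - p‖ ≤ S + M*Δ := by linarith
    calc |⟪m, E (X s) - E p⟫| ≤ ‖E (X s) - E p‖ := h2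
      _ ≤ L * ‖X s - p‖ := h3
      _ ≤ L * (S + M*Δ) := by nlinarith
      _ = B := hBdef.symm
  -- the grand induction along the partition
  have main : ∀ i : ℕ, i ≤ N →
      ∃ p m, p ∈ frontier Ω ∧ IsUnitOuterNormalAt Ω p m ∧
        ‖X (s₀ + i*Δ) - p‖ ≤ zeta (s₀ + i*Δ) ∧ -⟪m, X (s₀ + i*Δ) - p⟫ = zeta (s₀ + i*Δ) ∧
        -⟪m, V (s₀ + i*Δ)⟫ ≤ 2*B*Δ*i ∧ zeta (s₀ + i*Δ) ≤ (2*B*T*Δ + B*Δ^2)*i := by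
    intro i
    induction i with
    | zero =>
      intro _
      simp only [Nat.cast_zero, zero_mul, add_zero, mul_zero]
      exact ⟨X s₀, ν, hy, hν, by simp [hzs0], by simp [hzs0],
        by linarith [hvel], by simp [hzs0]⟩
    | succ i ih =>
      intro hi
      have hiN : i ≤ N := Nat.le_of_succ_le hi
      obtain ⟨p, m, hpf, hpm, hpa, hpae, hG, hZ⟩ := ih hiN
      have hmema := hσmem i hiN
      have hmemb := hσmem (i+1) hi
      have hab : s₀ + ((i+1:ℕ):ℝ)*Δ = (s₀ + (i:ℝ)*Δ) + Δ := by push_cast; ring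
      have hJsub : Icc (s₀ + (i:ℝ)*Δ) (s₀ + ((i+1:ℕ):ℝ)*Δ) ⊆ Icc s₀ τh :=
        Icc_subset_Icc hmema.1 hmemb.2
      have hSa : zeta (s₀ + (i:ℝ)*Δ) ≤ S := hSmax _ (hIccsub hmema)
      have hSb : zeta (s₀ + ((i+1:ℕ):ℝ)*Δ) ≤ S := hSmax _ (hIccsub hmemb)
      -- pair at the new point
      have hbIoc : s₀ + ((i+1:ℕ):ℝ)*Δ ∈ Ioc s₀ (s₀ + ρ) := by
        constructor
        · have h1 : (0:ℝ) < ((i+1:ℕ):ℝ)*Δ := by positivity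
          linarith
        · have := hmemb.2; linarith [hτmem.2]
      obtain ⟨p', m', hp'f, hp'm, hp'eq, hp'ie⟩ :=
        exists_pair hΩo hΩc hΩne hcne (hmem _ hbIoc)
      rw [← hzeq] at hp'eq hp'ie
      -- field bounds on the step interval
      have hEm : ∀ s ∈ Icc (s₀ + (i:ℝ)*Δ) (s₀ + ((i+1:ℕ):ℝ)*Δ), |⟪m, E (X s)⟫| ≤ B := by
        intro s hs
        refine hEb _ hmema p m hpf hpm (hpa.trans hSa) s (hJsub hs) ?_
        rw [abs_of_nonneg (by linarith [hs.1])]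
        have := hs.2; rw [hab] at this; linarith
      have hEm' : ∀ s ∈ Icc (s₀ + (i:ℝ)*Δ) (s₀ + ((i+1:ℕ):ℝ)*Δ), |⟪m', E (X s)⟫| ≤ B := by
        intro s hs
        refine hEb _ hmemb p' m' hp'f hp'm (hp'eq.le.trans hSb) s (hJsub hs) ?_
        rw [abs_of_nonpos (by linarith [hs.2]), neg_sub]
        have := hs.1; rw [hab]; linarith
      have hzleb : zeta (s₀ + ((i+1:ℕ):ℝ)*Δ) ≤ -⟪m, X (s₀ + ((i+1:ℕ):ℝ)*Δ) - p⟫ :=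
        hzle p m hpm _ (hIccsub hmemb)
      have hzlea : zeta (s₀ + (i:ℝ)*Δ) ≤ -⟪m', X (s₀ + (i:ℝ)*Δ) - p'⟫ :=
        hzle p' m' hp'm _ (hIccsub hmema)
      obtain ⟨hs1, hs2⟩ := step E X V hX hV _ _ Δ B hΔ hab hB0 p m p' m' _ _
        hEm hEm' hpae hzleb hp'ie hzlea
      have hiT : (i:ℝ)*Δ ≤ T := by
        have hiN' : (i:ℝ) ≤ (N:ℝ) := by exact_mod_cast hiN
        nlinarith [hNΔ]
      refine ⟨p', m', hp'f, hp'm, hp'eq.le, hp'ie, ?_, ?_⟩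
      · push_cast
        calc -⟪m', V (s₀ + ((i:ℝ)+1)*Δ)⟫ ≤ -⟪m, V (s₀ + (i:ℝ)*Δ)⟫ + 2*B*Δ := by
              have := hs1; push_cast at this; exact this
          _ ≤ 2*B*Δ*(i:ℝ) + 2*B*Δ := by linarith
          _ = 2*B*Δ*((i:ℝ)+1) := by ring
      · push_cast
        have h1 : Δ*(-⟪m, V (s₀ + (i:ℝ)*Δ)⟫) ≤ Δ*(2*B*Δ*(i:ℝ)) :=
          mul_le_mul_of_nonneg_left hG hΔ.le
        have h2 : B*Δ*((i:ℝ)*Δ) ≤ B*Δ*T :=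
          mul_le_mul_of_nonneg_left hiT (by positivity)
        calc zeta (s₀ + ((i:ℝ)+1)*Δ) ≤ zeta (s₀ + (i:ℝ)*Δ) + Δ*(-⟪m, V (s₀ + (i:ℝ)*Δ)⟫) + B*Δ^2 := by
              have := hs2; push_cast at this; exact this
          _ ≤ (2*B*T*Δ + B*Δ^2)*(i:ℝ) + 2*B*Δ^2*(i:ℝ) + B*Δ^2 := by nlinarith [hZ]
          _ ≤ (2*B*T*Δ + B*Δ^2)*((i:ℝ)+1) := by nlinarith [h2]
  -- conclusion: contradiction
  obtain ⟨p, m, _, _, _, _, _, hZfin⟩ := main N le_rfl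
  have hfin : s₀ + (N:ℝ)*Δ = τh := by
    have h3 : (N:ℝ)*Δ = τh - s₀ := hNΔ.trans hTdef
    linarith
  rw [hfin] at hZfin
  have hZ' : S ≤ 2*B*T*T + B*Δ*T := by
    have h1 : zeta τh ≤ (2*B*T*Δ + B*Δ^2)*N := hZfin
    have h2 : (2*B*T*Δ + B*Δ^2)*(N:ℝ) = 2*B*T*((N:ℝ)*Δ) + B*Δ*((N:ℝ)*Δ) := by ring
    rw [hSdef]
    calc zeta τh ≤ (2*B*T*Δ + B*Δ^2)*(N:ℝ) := h1
      _ = 2*B*T*((N:ℝ)*Δ) + B*Δ*((N:ℝ)*Δ) := h2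
      _ = 2*B*T*T + B*Δ*T := by rw [hNΔ]
  have hΔCc : Δ * (4*Cc) ≤ S := by
    have h := hΔS
    rwa [le_div_iff₀ (by positivity)] at h
  have hA1 : 2*B*T*T ≤ 2*B*ρ*ρ := by
    have h := mul_nonneg (sub_nonneg.2 hTρ) (add_nonneg hρ0.le hT.le)
    nlinarith [mul_nonneg hB0 h]
  have hA2 : B*Δ*T ≤ B*Δ*ρ := by
    nlinarith [mul_le_mul_of_nonneg_left hTρ (mul_nonneg hB0 hΔ.le)]
  have hBexp : 2*B*ρ*ρ + B*Δ*ρ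
      = 2*L*S*ρ^2 + Δ*(2*L*M*ρ^2) + Δ*(L*S*ρ) + Δ*Δ*(L*M*ρ) := by
    rw [hBdef]; ring
  have hA3 : 2*L*S*ρ^2 ≤ S/2 := by nlinarith [hρL, hS.le]
  have hA4 : Δ*Δ*(L*M*ρ) ≤ Δ*(L*M*ρ) := by
    have h1 : 0 ≤ L*M*ρ := by positivity
    nlinarith [mul_nonneg (mul_nonneg hΔ.le (sub_nonneg.2 hΔ1)) h1]
  have hA5 : Δ*(2*L*M*ρ^2) + Δ*(L*S*ρ) + Δ*(L*M*ρ) ≤ Δ*Cc := by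
    have h2 : (2*L*M*ρ^2) + (L*S*ρ) + (L*M*ρ) ≤ Cc := by rw [hCcdef]; linarith
    nlinarith [mul_le_mul_of_nonneg_left h2 hΔ.le]
  have hA6 : Δ*Cc ≤ S/4 := by linarith
  linarith


end NonGrazingAux

/-- Lemma 2.4, avoiding grazing trajectories: if the field `E` is
tangent to the boundary, then backward exit from an outgoing boundary point is
non-grazing. Here `s ↦ (X s, V s)` is the characteristic through `(x,v)` at time `t`,
and `tm` is the backward exit time. -/
theorem backward_exit_nongrazing
    (Ω : Set V3) (hΩo : IsOpen Ω) (hΩb : Bornology.IsBounded Ω) (hΩc : Convex ℝ Ω)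
    (hΩne : Ω.Nonempty)
    (E : V3 → V3)
    -- `E` is `C¹` on a neighborhood of `Ω̄` (with finite `C¹` norm there)
    (hEC1 : ∃ W : Set V3, IsOpen W ∧ closure Ω ⊆ W ∧ ContDiffOn ℝ 1 E W)
    -- `⟨ν, E(x)⟩ = 0` for every `x ∈ ∂Ω` and every unit outer normal `ν` at `x`
    (hEtan : ∀ x ∈ frontier Ω, ∀ ν : V3, IsUnitOuterNormalAt Ω x ν → ⟪ν, E x⟫ = 0)
    (t : ℝ) (x : V3) (hx : x ∈ frontier Ω) (v : V3)
    -- `⟨n₀, v⟩ > 0` for some unit outer normal `n₀` at `x`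
    (hv : ∃ n₀ : V3, IsUnitOuterNormalAt Ω x n₀ ∧ 0 < ⟪n₀, v⟫)
    -- the characteristic curve through `(x,v)` at time `t`
    (X V : ℝ → V3)
    (hX : ∀ s : ℝ, HasDerivAt X (V s) s)
    (hV : ∀ s : ℝ, HasDerivAt V (E (X s)) s)
    (hXt : X t = x) (hVt : V t = v)
    -- the backward exit time `t₋(t,x,v)`, assumed finite and positive
    (tm : ℝ)
    (htm : tm = sSup {s : ℝ | 0 ≤ s ∧ ∀ τ ∈ Ioo (t - s) t, X τ ∈ Ω})
    (hbdd : BddAbove {s : ℝ | 0 ≤ s ∧ ∀ τ ∈ Ioo (t - s) t, X τ ∈ Ω})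
    (htm0 : 0 < tm)
    -- `t + 1 ≥ t₋(t,x,v)`
    (htm1 : tm ≤ t + 1) :
    -- the backward exit position lies on `∂Ω`, and the exit is non-grazing
    X (t - tm) ∈ frontier Ω ∧
      ∀ ν : V3, IsUnitOuterNormalAt Ω (X (t - tm)) ν → ⟪ν, V (t - tm)⟫ < 0 := by
  classical
  have hXc : Continuous X := by
    rw [continuous_iff_continuousAt]; exact fun s => (hX s).continuousAt
  have hs₀t : t - tm < t := by linarith
  set Sset := {s : ℝ | 0 ≤ s ∧ ∀ τ ∈ Ioo (t - s) t, X τ ∈ Ω} with hSsetdef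
  have hSne : Sset.Nonempty := by
    refine ⟨0, le_rfl, ?_⟩
    intro τ hτ
    exfalso
    rw [sub_zero] at hτ
    exact absurd hτ.1 (not_lt.2 hτ.2.le)
  have ha : ∀ τ ∈ Ioo (t - tm) t, X τ ∈ Ω := by
    intro τ hτ
    have h1 : t - τ < tm := by linarith [hτ.1]
    rw [htm] at h1
    obtain ⟨s, hsS, hlt⟩ := exists_lt_of_lt_csSup hSne h1
    exact hsS.2 τ ⟨by linarith, hτ.2⟩
  have hclos : X (t - tm) ∈ closure Ω := by
    have htend : Filter.Tendsto X (nhdsWithin (t - tm) (Ioi (t - tm))) (nhds (X (t - tm))) :=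
      (hXc.tendsto (t - tm)).mono_left nhdsWithin_le_nhds
    apply mem_closure_of_tendsto htend
    filter_upwards [Ioo_mem_nhdsGT_of_mem ⟨le_refl (t - tm), hs₀t⟩] with τ hτ
    exact ha τ hτ
  have hnot : X (t - tm) ∉ Ω := by
    intro hmem0
    have hpre : X ⁻¹' Ω ∈ nhds (t - tm) := hXc.continuousAt.preimage_mem_nhds (hΩo.mem_nhds hmem0)
    obtain ⟨ε, hε, hball⟩ := Metric.mem_nhds_iff.1 hpre
    have hSmem : tm + ε/2 ∈ Sset := by
      constructor
      · linarith
      · intro τ hτ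
        rcases lt_or_ge (t - tm) τ with h | h
        · exact ha τ ⟨h, hτ.2⟩
        · apply hball
          rw [Metric.mem_ball, Real.dist_eq]
          have h1 : t - (tm + ε/2) < τ := hτ.1
          rw [abs_lt]
          constructor <;> linarith
    have hle := le_csSup hbdd hSmem
    rw [← htm] at hle
    linarith
  have hfront : X (t - tm) ∈ frontier Ω := by
    rw [hΩo.frontier_eq]; exact ⟨hclos, hnot⟩
  refine ⟨hfront, ?_⟩
  intro ν hν
  by_contra hcon
  rw [not_lt] at hcon
  -- Lipschitz constant for E on the closure
  obtain ⟨W, hWo, hKW, hEC⟩ := hEC1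
  have hKcpt : IsCompact (closure Ω) := hΩb.isCompact_closure
  have hdiff : ∀ z ∈ closure Ω, DifferentiableAt ℝ E z := fun z hz =>
    (hEC.differentiableOn one_ne_zero).differentiableAt (hWo.mem_nhds (hKW hz))
  have hfc : ContinuousOn (fderiv ℝ E) (closure Ω) :=
    (hEC.continuousOn_fderiv_of_isOpen hWo le_rfl).mono hKW
  obtain ⟨C, hC⟩ := hKcpt.exists_bound_of_continuousOn hfc
  set L := max C 0 with hLdef
  have hL0 : 0 ≤ L := le_max_right _ _
  have hLip : ∀ z ∈ closure Ω, ∀ w ∈ closure Ω, ‖E z - E w‖ ≤ L * ‖z - w‖ := by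
    intro z hz w hw
    exact Convex.norm_image_sub_le_of_norm_fderiv_le hdiff
      (fun u hu => (hC u hu).trans (le_max_left _ _)) hΩc.closure hw hz
  -- the complement is nonempty
  obtain ⟨R, hR⟩ := hΩb.subset_ball 0
  have hcne : Ωᶜ.Nonempty := by
    refine ⟨EuclideanSpace.single 0 (|R| + 1), fun hmem0 => ?_⟩
    have h1 := hR hmem0
    rw [Metric.mem_ball, dist_zero_right, EuclideanSpace.norm_single,
      Real.norm_eq_abs, abs_of_nonneg (by positivity)] at h1
    linarith [le_abs_self R]
  -- choice of ρ
  set ρ := min (tm/2) (1/(2*(L+1))) with hρdef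
  have hρ0 : 0 < ρ := lt_min (by linarith) (by positivity)
  have hρL : L * ρ^2 ≤ 1/4 := by
    have h1 : ρ ≤ 1/(2*(L+1)) := min_le_right _ _
    have h2 : (0:ℝ) < L + 1 := by linarith
    have h3 : ρ^2 ≤ (1/(2*(L+1)))^2 := by nlinarith [hρ0.le]
    have h4 : L * ρ^2 ≤ L * (1/(2*(L+1)))^2 := by nlinarith
    have hq : (1/(2*(L+1)))^2 * (4*(L+1)^2) = 1 := by
      field_simp
      ring
    have h5 : (0:ℝ) ≤ (L+1)^2 - L := by nlinarith
    nlinarith [h4, hq, mul_nonneg h5 (sq_nonneg (1/(2*(L+1))))]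
  have hmemc : ∀ σ ∈ Ioc (t - tm) ((t - tm) + ρ), X σ ∈ Ω := by
    intro σ hσ
    apply ha
    refine ⟨hσ.1, ?_⟩
    have h1 : ρ ≤ tm/2 := min_le_left _ _
    have h2 := hσ.2
    linarith
  exact NonGrazingAux.core Ω hΩo hΩc hΩne hcne E hEtan L hL0 hLip X V hX hV
    (t - tm) ρ hρ0 hρL hmemc hfront ν hν hcon
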